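/- For every integer ℓ≥2 and every commutative ring R with unity, the R-algebra homomorphism F: R_{0,[ℓ]} → R_{0,[ℓ+1]} defined by F(ℝE_{J,K}) = ℝẼ⁺_{J,K} + ℝẼ⁻_{J,K} and F(ℝD_{I;J,K}) = ℝD̃⁺_{I;J,K} + ℝD̃⁰_{I;J,K} + ℝD̃⁻_{I;J,K} satisfies F(I_{0,[ℓ]}) ⊆ I_{0,[ℓ+1]}. -/

import Mathlib

open MvPolynomial Finset TensorProduct

noncomputable section

/-- `[ℓ] = {1, …, ℓ}`. -/
abbrev Iset (n : ℕ) : Finset ℕ := Finset.Icc 1 n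

/-! ### The "complex" rings `R_S = R[(D_{J,K})_{{J,K} ∈ P•(S)}]`.
An unordered pair `{J,K}` with `J ⊔ K = S` and `2 ≤ |J| ≤ |S|-2` is represented by
its unique member containing `min S`. -/

/-- Index type for the variables `D_{J,K}`, `{J,K} ∈ P•(S)`: the canonical member
of the pair is the one whose minimum is `min S`. -/
abbrev CxIdx (S : Finset ℕ) : Type :=
  {J : Finset ℕ // J ⊆ S ∧ 2 ≤ J.card ∧ 2 ≤ (S \ J).card ∧ J.min = S.min}

/-- The polynomial ring `R_S` on the variables `D_{J,K}`, `{J,K} ∈ P•(S)`. -/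
abbrev CxRing (R : Type) [CommRing R] (S : Finset ℕ) : Type := MvPolynomial (CxIdx S) R

def cxXv (R : Type) [CommRing R] (S J : Finset ℕ) : CxRing R S :=
  if h : J ⊆ S ∧ 2 ≤ J.card ∧ 2 ≤ (S \ J).card ∧ J.min = S.min then X ⟨J, h⟩ else 0

/-- The variable `D_{J,K}` of `R_S` (equal to `0` if `{J,K} ∉ P•(S)`). -/
def cxD (R : Type) [CommRing R] (S J K : Finset ℕ) : CxRing R S :=
  if Disjoint J K ∧ J ∪ K = S then (if J.min ≤ K.min then cxXv R S J else cxXv R S K)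
  else 0

/-- `{J,K} ⋂̸ {J',K'}`:  `J ⊄ J'`, `J ⊄ K'`, `J' ⊄ J` and `K' ⊄ J`. -/
abbrev NcapCx (J J' K' : Finset ℕ) : Prop :=
  ¬ J ⊆ J' ∧ ¬ J ⊆ K' ∧ ¬ J' ⊆ J ∧ ¬ K' ⊆ J

/-- The element `R^S_{abcd}`. -/
def cxRel (R : Type) [CommRing R] (S : Finset ℕ) (a b c d : ℕ) : CxRing R S :=
  (∑ J ∈ S.powerset,
    if 2 ≤ J.card ∧ 2 ≤ (S \ J).card ∧ a ∈ J ∧ b ∈ J ∧ c ∈ S \ J ∧ d ∈ S \ J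
    then cxD R S J (S \ J) else 0)
  - ∑ J ∈ S.powerset,
    if 2 ≤ J.card ∧ 2 ≤ (S \ J).card ∧ a ∈ J ∧ c ∈ J ∧ b ∈ S \ J ∧ d ∈ S \ J
    then cxD R S J (S \ J) else 0

/-- The ideal `I_S ⊂ R_S`. -/
def cxIdeal (R : Type) [CommRing R] (S : Finset ℕ) : Ideal (CxRing R S) :=
  Ideal.span (
    {x | ∃ J K J' K' : Finset ℕ,
      (Disjoint J K ∧ J ∪ K = S ∧ 2 ≤ J.card ∧ 2 ≤ K.card) ∧
      (Disjoint J' K' ∧ J' ∪ K' = S ∧ 2 ≤ J'.card ∧ 2 ≤ K'.card) ∧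
      NcapCx J J' K' ∧ x = cxD R S J K * cxD R S J' K'} ∪
    {x | ∃ a b c d : ℕ, a ∈ S ∧ b ∈ S ∧ c ∈ S ∧ d ∈ S ∧ a ≠ b ∧ c ≠ d ∧
      x = cxRel R S a b c d})

/-- The homomorphism `F : R_{[ℓ]} → R_{[ℓ+1]}`, `D_{J,K} ↦ D_{J∪{ℓ+1},K} + D_{J,K∪{ℓ+1}}`. -/
def Fcx (R : Type) [CommRing R] (ℓ : ℕ) : CxRing R (Iset ℓ) →ₐ[R] CxRing R (Iset (ℓ + 1)) :=
  aeval fun i =>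
    cxD R (Iset (ℓ + 1)) (i.1 ∪ {ℓ + 1}) (Iset ℓ \ i.1)
    + cxD R (Iset (ℓ + 1)) i.1 ((Iset ℓ \ i.1) ∪ {ℓ + 1})

/-- The homomorphism `F_P : R_{{nd}⊔B} → R_{[ℓ]}`, `D_{J',K'} ↦ D_{P∪(J'-{nd}),K'}` for
`nd ∈ J'`; here `nd = 0`. -/
def FJcx (R : Type) [CommRing R] (ℓ : ℕ) (P B : Finset ℕ) :
    CxRing R (insert 0 B) →ₐ[R] CxRing R (Iset ℓ) :=
  aeval fun i => cxD R (Iset ℓ) (P ∪ i.1.erase 0) (insert 0 B \ i.1)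

/-- The homomorphism `F_{J,K} : R_{{nd}⊔J} ⊗ R_{{nd}⊔K} → R_{[ℓ]}` acting by `F_K` on the
first factor and by `F_J` on the second. -/
def FJKcx (R : Type) [CommRing R] (ℓ : ℕ) (J K : Finset ℕ) :
    TensorProduct R (CxRing R (insert 0 J)) (CxRing R (insert 0 K)) →ₐ[R] CxRing R (Iset ℓ) :=
  Algebra.TensorProduct.productMap (FJcx R ℓ K J) (FJcx R ℓ J K)

/-- The submodule `A ⊗ I_B + I_A ⊗ B` of `A ⊗_R B`. -/
def mixedSub (R : Type) [CommRing R] {A B : Type} [CommRing A] [CommRing B]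
    [Algebra R A] [Algebra R B] (IA : Ideal A) (IB : Ideal B) :
    Submodule R (TensorProduct R A B) :=
  Submodule.span R
    ({x | ∃ p q, q ∈ IB ∧ x = p ⊗ₜ[R] q} ∪ {x | ∃ p q, p ∈ IA ∧ x = p ⊗ₜ[R] q})

/-! ### The "real" rings `R_{0,S}` with variables `ℝE_{J,K}`, `{J,K} ∈ P(S)`, and
`ℝD_{I;J,K}`, `(I,{J,K}) ∈ P̃•(S)`.  The unordered pair `{J,K}` is represented by
its member whose minimum equals the minimum of `J ∪ K`. -/

abbrev EIdx (S : Finset ℕ) : Type := {J : Finset ℕ // J ⊆ S ∧ J.min = S.min}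

abbrev DIdx (S : Finset ℕ) : Type :=
  {p : Finset ℕ × Finset ℕ //
    p.1 ⊆ S ∧ p.2 ⊆ S \ p.1 ∧ 1 ≤ p.1.card ∧ 2 ≤ (S \ p.1).card ∧ p.2.min = (S \ p.1).min}

/-- The polynomial ring `R_{0,S}`. -/
abbrev RRing (R : Type) [CommRing R] (S : Finset ℕ) : Type :=
  MvPolynomial (EIdx S ⊕ DIdx S) R

def reXe (R : Type) [CommRing R] (S J : Finset ℕ) : RRing R S :=
  if h : J ⊆ S ∧ J.min = S.min then X (Sum.inl ⟨J, h⟩) else 0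

/-- The variable `ℝE_{J,K}` of `R_{0,S}` (equal to `0` if `{J,K} ∉ P(S)`). -/
def reE (R : Type) [CommRing R] (S J K : Finset ℕ) : RRing R S :=
  if Disjoint J K ∧ J ∪ K = S then (if J.min ≤ K.min then reXe R S J else reXe R S K)
  else 0

def reXd (R : Type) [CommRing R] (S I J : Finset ℕ) : RRing R S :=
  if h : I ⊆ S ∧ J ⊆ S \ I ∧ 1 ≤ I.card ∧ 2 ≤ (S \ I).card ∧ J.min = (S \ I).min
  then X (Sum.inr ⟨(I, J), h⟩) else 0

/-- The variable `ℝD_{I;J,K}` of `R_{0,S}` (equal to `0` if `(I,{J,K}) ∉ P̃•(S)`). -/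
def reD (R : Type) [CommRing R] (S I J K : Finset ℕ) : RRing R S :=
  if Disjoint I (J ∪ K) ∧ Disjoint J K ∧ I ∪ (J ∪ K) = S then
    (if J.min ≤ K.min then reXd R S I J else reXd R S I K)
  else 0

/-- The sign `ε_{J,K}`: `1` if `min (J ∪ K) ∈ J` and `-1` otherwise. -/
def epsm (J K : Finset ℕ) : ℤ := if J.min ≤ K.min then 1 else -1

/-- `{J,K} ⪯ {J',K'}`. -/
abbrev preceq (J K J' K' : Finset ℕ) : Prop := (J ⊆ J' ∧ K ⊆ K') ∨ (J ⊆ K' ∧ K ⊆ J')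

/-- `{J,K} ∈ P(S)`. -/
abbrev validE (S J K : Finset ℕ) : Prop := Disjoint J K ∧ J ∪ K = S

/-- `(I,{J,K}) ∈ P̃•(S)`. -/
abbrev validD (S I J K : Finset ℕ) : Prop :=
  Disjoint I (J ∪ K) ∧ Disjoint J K ∧ I ∪ (J ∪ K) = S ∧ 1 ≤ I.card ∧ 2 ≤ (J ∪ K).card

/-- The element `E^S_{abc}`. -/
def relE (R : Type) [CommRing R] (S : Finset ℕ) (a b c : ℕ) : RRing R S :=
  (∑ I ∈ S.powerset, ∑ J ∈ (S \ I).powerset,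
    if 1 ≤ I.card ∧ 2 ≤ (S \ I).card ∧ a ∈ J ∧ b ∈ J ∧ c ∈ I
    then epsm J ((S \ I) \ J) • reD R S I J ((S \ I) \ J) else 0)
  - (∑ I ∈ S.powerset, ∑ J ∈ (S \ I).powerset,
    if 1 ≤ I.card ∧ 2 ≤ (S \ I).card ∧ a ∈ J ∧ c ∈ J ∧ b ∈ I
    then epsm J ((S \ I) \ J) • reD R S I J ((S \ I) \ J) else 0)
  - ∑ I ∈ S.powerset, ∑ J ∈ (S \ I).powerset,
    if 1 ≤ I.card ∧ 2 ≤ (S \ I).card ∧ a ∈ I ∧ b ∈ J ∧ c ∈ (S \ I) \ J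
    then epsm J ((S \ I) \ J) • reD R S I J ((S \ I) \ J) else 0

/-- The element `Σ_{{J,K} ∈ P(S)} ℝE_{J,K}`. -/
def relEsum (R : Type) [CommRing R] (S : Finset ℕ) : RRing R S :=
  ∑ J ∈ S.powerset.filter (fun J => J.min = S.min), reE R S J (S \ J)

/-- The ideal `I_{0,S} ⊂ R_{0,S}`. -/
def reIdeal (R : Type) [CommRing R] (S : Finset ℕ) : Ideal (RRing R S) :=
  Ideal.span (
    {x | ∃ J K J' K' : Finset ℕ, validE S J K ∧ validE S J' K' ∧
      x = reE R S J K * reE R S J' K'} ∪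
    {x | ∃ J K I' J' K' : Finset ℕ, validE S J K ∧ validD S I' J' K' ∧
      ¬ preceq J' K' J K ∧ x = reE R S J K * reD R S I' J' K'} ∪
    {x | ∃ I J K I' J' K' : Finset ℕ, validD S I J K ∧ validD S I' J' K' ∧
      ¬ preceq J K J' K' ∧ ¬ preceq J' K' J K ∧ ¬ J ∪ K ⊆ I' ∧
      x = reD R S I J K * reD R S I' J' K'} ∪
    {relEsum R S} ∪
    {x | ∃ a b c : ℕ, a ∈ S ∧ b ∈ S ∧ c ∈ S ∧ a ≠ b ∧ a ≠ c ∧ b ≠ c ∧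
      x = relE R S a b c})

/-- The element `G_{abc}` of Remark `RcM04rel_e2b2`. -/
def relG (R : Type) [CommRing R] (S : Finset ℕ) (a b c : ℕ) : RRing R S :=
  (∑ I ∈ S.powerset, ∑ J ∈ (S \ I).powerset,
    if 1 ≤ I.card ∧ 2 ≤ (S \ I).card ∧ a ∈ J ∧ b ∉ I ∧ c ∈ I
    then epsm J ((S \ I) \ J) • reD R S I J ((S \ I) \ J) else 0)
  - ∑ I ∈ S.powerset, ∑ J ∈ (S \ I).powerset,
    if 1 ≤ I.card ∧ 2 ≤ (S \ I).card ∧ a ∈ J ∧ b ∈ I ∧ c ∉ I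
    then epsm J ((S \ I) \ J) • reD R S I J ((S \ I) \ J) else 0

/-- The homomorphism `F : R_{0,[ℓ]} → R_{0,[ℓ+1]}`. -/
def Fre (R : Type) [CommRing R] (ℓ : ℕ) : RRing R (Iset ℓ) →ₐ[R] RRing R (Iset (ℓ + 1)) :=
  aeval fun ix =>
    match ix with
    | Sum.inl e =>
        reE R (Iset (ℓ + 1)) (e.1 ∪ {ℓ + 1}) (Iset ℓ \ e.1)
        + reE R (Iset (ℓ + 1)) e.1 ((Iset ℓ \ e.1) ∪ {ℓ + 1})
    | Sum.inr d =>
        reD R (Iset (ℓ + 1)) (d.1.1 ∪ {ℓ + 1}) d.1.2 ((Iset ℓ \ d.1.1) \ d.1.2)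
        + reD R (Iset (ℓ + 1)) d.1.1 (d.1.2 ∪ {ℓ + 1}) ((Iset ℓ \ d.1.1) \ d.1.2)
        + reD R (Iset (ℓ + 1)) d.1.1 d.1.2 (((Iset ℓ \ d.1.1) \ d.1.2) ∪ {ℓ + 1})

/-- `ℝẼ⁰_{J,K} = ℝD_{{ℓ+1};J,K} ∈ R_{0,[ℓ+1]}`. -/
def reEt0 (R : Type) [CommRing R] (ℓ : ℕ) (J K : Finset ℕ) : RRing R (Iset (ℓ + 1)) :=
  reD R (Iset (ℓ + 1)) {ℓ + 1} J K

/-- `ℝẼ⁻_{J,K} = ℝE_{J,K∪{ℓ+1}} ∈ R_{0,[ℓ+1]}`. -/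
def reEtm (R : Type) [CommRing R] (ℓ : ℕ) (J K : Finset ℕ) : RRing R (Iset (ℓ + 1)) :=
  reE R (Iset (ℓ + 1)) J (K ∪ {ℓ + 1})

/-- `ℝD̃⁰_{I;J,K} ∈ R_{0,[ℓ+1]}` (for `(I,{J,K})` written with `min (J∪K) ∈ J`). -/
def reDt0 (R : Type) [CommRing R] (ℓ : ℕ) (I J K : Finset ℕ) : RRing R (Iset (ℓ + 1)) :=
  if 1 ∈ I then reD R (Iset (ℓ + 1)) I (J ∪ {ℓ + 1}) K
  else reD R (Iset (ℓ + 1)) (I ∪ {ℓ + 1}) J K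

/-- `ℝD̃⁻_{I;J,K} = ℝD_{I;J,K∪{ℓ+1}} ∈ R_{0,[ℓ+1]}`. -/
def reDtm (R : Type) [CommRing R] (ℓ : ℕ) (I J K : Finset ℕ) : RRing R (Iset (ℓ + 1)) :=
  reD R (Iset (ℓ + 1)) I J (K ∪ {ℓ + 1})

/-- The homomorphism `F_{J,K} : R^{cx}_{{nd}⊔[ℓ]} → R_{0,[ℓ]}`,
`D_{J',K'} ↦ (-1)^{|K|} ε_{J∩K',K∩K'} ℝD_{J'-{nd};J∩K',K∩K'}` for `nd ∈ J'`; here `nd = 0`. -/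
def FJKre (R : Type) [CommRing R] (ℓ : ℕ) (J K : Finset ℕ) :
    CxRing R (insert 0 (Iset ℓ)) →ₐ[R] RRing R (Iset ℓ) :=
  aeval fun i =>
    ((-1 : ℤ) ^ K.card *
        epsm (J ∩ (insert 0 (Iset ℓ) \ i.1)) (K ∩ (insert 0 (Iset ℓ) \ i.1))) •
      reD R (Iset ℓ) (i.1.erase 0)
        (J ∩ (insert 0 (Iset ℓ) \ i.1)) (K ∩ (insert 0 (Iset ℓ) \ i.1))

/-- The homomorphism `F²_{I;J,K} : R^{cx}_{{nd}⊔(J∪K)} → R_{0,[ℓ]}`,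
`D_{J',K'} ↦ (-1)^{|K|} ε_{J∩K',K∩K'} ℝD_{I∪(J'-{nd});J∩K',K∩K'}` for `nd ∈ J'`;
here `nd = 0`. -/
def F2IJK (R : Type) [CommRing R] (ℓ : ℕ) (I J K : Finset ℕ) :
    CxRing R (insert 0 (J ∪ K)) →ₐ[R] RRing R (Iset ℓ) :=
  aeval fun i =>
    ((-1 : ℤ) ^ K.card *
        epsm (J ∩ (insert 0 (J ∪ K) \ i.1)) (K ∩ (insert 0 (J ∪ K) \ i.1))) •
      reD R (Iset ℓ) (I ∪ i.1.erase 0)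
        (J ∩ (insert 0 (J ∪ K) \ i.1)) (K ∩ (insert 0 (J ∪ K) \ i.1))

/-- `nd` for `{nd} ⊔ I`, identified with `min (ℤ⁺ - I)`. -/
def ndOf (I : Finset ℕ) : ℕ := sInf {n : ℕ | 0 < n ∧ n ∉ I}

/-- The homomorphism `F¹_{I;J,K} : R_{0,{nd}⊔I} → R_{0,[ℓ]}` with `nd = min (ℤ⁺ - I)`. -/
def F1IJK (R : Type) [CommRing R] (ℓ : ℕ) (I J K : Finset ℕ) :
    RRing R (insert (ndOf I) I) →ₐ[R] RRing R (Iset ℓ) :=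
  aeval fun ix =>
    match ix with
    | Sum.inl e =>
        if ndOf I ∈ e.1 then
          reE R (Iset ℓ) (J ∪ e.1.erase (ndOf I)) (K ∪ (insert (ndOf I) I \ e.1))
        else
          reE R (Iset ℓ) (J ∪ (insert (ndOf I) I \ e.1).erase (ndOf I)) (K ∪ e.1)
    | Sum.inr d =>
        if ndOf I ∈ d.1.1 then
          reD R (Iset ℓ) (d.1.1.erase (ndOf I) ∪ J ∪ K) d.1.2
            ((insert (ndOf I) I \ d.1.1) \ d.1.2)
        else if ndOf I ∈ d.1.2 then
          reD R (Iset ℓ) d.1.1 (J ∪ d.1.2.erase (ndOf I))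
            (K ∪ ((insert (ndOf I) I \ d.1.1) \ d.1.2))
        else
          reD R (Iset ℓ) d.1.1
            (J ∪ ((insert (ndOf I) I \ d.1.1) \ d.1.2).erase (ndOf I)) (K ∪ d.1.2)

/-- The homomorphism `F_{I;J,K} : R_{0,{nd}⊔I} ⊗ R^{cx}_{{nd}⊔(J∪K)} → R_{0,[ℓ]}`
induced by `F¹_{I;J,K}` and `F²_{I;J,K}`. -/
def FIJK (R : Type) [CommRing R] (ℓ : ℕ) (I J K : Finset ℕ) :
    TensorProduct R (RRing R (insert (ndOf I) I)) (CxRing R (insert 0 (J ∪ K))) →ₐ[R]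
      RRing R (Iset ℓ) :=
  Algebra.TensorProduct.productMap (F1IJK R ℓ I J K) (F2IJK R ℓ I J K)

/-!
`F` sends every variable to the sum of its lifts: the variables of `R_{0,[ℓ+1]}` whose index
meets `[ℓ]` in the given one. The conditions `⋠`, `∥` and `J ∪ K ⊄ I'` defining the quadratic
generators survive lifting, because `⪯` and `⊆` survive intersecting with `[ℓ]`; so every product
of lifts of a quadratic generator is again a quadratic generator. For the linear generators, each
term of `Σ ℝE` or `E_{abc}` at level `ℓ + 1` comes from exactly one term at level `ℓ` by adding
`ℓ + 1` to one of its index sets, with the same sign `ε` since `ℓ + 1` is the largest element;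
hence `F` maps these relations to the same relations for `[ℓ + 1]`.
-/
lemma Iset_succ (ℓ : ℕ) : Iset (ℓ + 1) = insert (ℓ + 1) (Iset ℓ) := by
  ext x; simp; omega

lemma succ_notMem_Iset (ℓ : ℕ) : ℓ + 1 ∉ Iset ℓ := by simp

lemma Iset_subset_Iset_succ (ℓ : ℕ) : Iset ℓ ⊆ Iset (ℓ + 1) :=
  Iset_succ ℓ ▸ subset_insert _ _

lemma Iset_succ_sdiff {ℓ : ℕ} {J : Finset ℕ} (hJ : J ⊆ Iset ℓ) :
    Iset (ℓ + 1) \ J = insert (ℓ + 1) (Iset ℓ \ J) := by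
  rw [Iset_succ, insert_sdiff_of_notMem _ fun h => succ_notMem_Iset ℓ (hJ h)]

lemma Iset_succ_sdiff_insert (ℓ : ℕ) (J : Finset ℕ) :
    Iset (ℓ + 1) \ insert (ℓ + 1) J = Iset ℓ \ J := by
  rw [Iset_succ, insert_sdiff_insert, sdiff_insert_of_notMem (succ_notMem_Iset ℓ)]

lemma min_eq_coe_iff_mem {α : Type*} [LinearOrder α] {J : Finset α} {a : α}
    (h : ∀ b ∈ J, a ≤ b) : J.min = WithTop.some a ↔ a ∈ J :=
  ⟨mem_of_min, fun ha => le_antisymm (min_le ha) (Finset.le_min fun b hb =>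
    WithTop.coe_le_coe.2 (h b hb))⟩

lemma eq_of_disjoint_of_min_eq {α : Type*} [LinearOrder α] {J K : Finset α} (hd : Disjoint J K)
    (h : J.min = K.min) : J = K := by
  rcases J.eq_empty_or_nonempty with rfl | ⟨x, hx⟩
  · exact (min_eq_top.1 (h ▸ min_empty)).symm
  · obtain ⟨m, hm⟩ := min_of_mem hx
    exact absurd (mem_of_min (h ▸ hm)) (disjoint_left.1 hd (mem_of_min hm))

lemma min_le_of_exists_le {α : Type*} [LinearOrder α] {a : α} {J : Finset α} (h : ∃ x ∈ J, x ≤ a) :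
    J.min ≤ WithTop.some a := by
  obtain ⟨x, hx, hxa⟩ := h
  exact (min_le hx).trans (WithTop.coe_le_coe.2 hxa)

lemma epsm_insert_left {a : ℕ} {J : Finset ℕ} (K : Finset ℕ) (h : ∃ x ∈ J, x ≤ a) :
    epsm (insert a J) K = epsm J K := by
  rw [epsm, epsm, min_insert, min_eq_right (min_le_of_exists_le h)]

lemma epsm_insert_right {a : ℕ} {J : Finset ℕ} (K : Finset ℕ) (h : ∃ x ∈ J, x ≤ a) :
    epsm J (insert a K) = epsm J K := by
  simp only [epsm, min_insert, le_min_iff, min_le_of_exists_le h, true_and]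

lemma sum_powerset_insert_sdiff {α β : Type*} [DecidableEq α] [AddCommMonoid β] {a : α}
    {T : Finset α} (ha : a ∉ T) (g : Finset α → Finset α → β) :
    ∑ I ∈ (insert a T).powerset, ∑ J ∈ (insert a T \ I).powerset, g I J =
      ∑ I ∈ T.powerset, ∑ J ∈ (T \ I).powerset, (g (insert a I) J + g I (insert a J) + g I J) := by
  rw [sum_powerset_insert ha, add_comm, ← sum_add_distrib]
  refine sum_congr rfl fun I hI => ?_
  have haI : a ∉ I := fun h => ha (mem_powerset.1 hI h)
  rw [insert_sdiff_insert, sdiff_insert_of_notMem ha, insert_sdiff_of_notMem _ haI,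
    sum_powerset_insert fun h => ha (mem_sdiff.1 h).1, sum_add_distrib, sum_add_distrib]
  abel

lemma preceq_inter (T : Finset ℕ) {J K J' K' : Finset ℕ} (h : preceq J K J' K') :
    preceq (J ∩ T) (K ∩ T) (J' ∩ T) (K' ∩ T) :=
  h.imp (And.imp inter_subset_inter_right inter_subset_inter_right)
    (And.imp inter_subset_inter_right inter_subset_inter_right)

lemma union_inter_subset_inter {J K I T : Finset ℕ} (h : J ∪ K ⊆ I) :
    J ∩ T ∪ K ∩ T ⊆ I ∩ T := by
  rw [← union_inter_distrib_right]; exact inter_subset_inter_right h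

lemma insert_inter_eq {a : ℕ} {A T : Finset ℕ} (ha : a ∉ T) (hA : A ⊆ T) : insert a A ∩ T = A := by
  rw [insert_inter_of_notMem ha, inter_eq_left.2 hA]

section Insert

variable {S I J K : Finset ℕ} {a : ℕ}

lemma validE_symm (h : validE S J K) : validE S K J :=
  ⟨h.1.symm, union_comm J K ▸ h.2⟩

lemma validD_symm (h : validD S I J K) : validD S I K J :=
  ⟨union_comm J K ▸ h.1, h.2.1.symm, union_comm J K ▸ h.2.2.1, h.2.2.2.1,
    union_comm J K ▸ h.2.2.2.2⟩

lemma validE_insert_left (h : validE S J K) (ha : a ∉ S) : validE (insert a S) (insert a J) K :=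
  ⟨disjoint_insert_left.2 ⟨fun hK => ha (h.2 ▸ mem_union_right J hK), h.1⟩, by
    rw [insert_union, h.2]⟩

lemma validE_insert_right (h : validE S J K) (ha : a ∉ S) : validE (insert a S) J (insert a K) :=
  ⟨disjoint_insert_right.2 ⟨fun hJ => ha (h.2 ▸ mem_union_left K hJ), h.1⟩, by
    rw [union_insert, h.2]⟩

lemma validD_insert_I (h : validD S I J K) (ha : a ∉ S) : validD (insert a S) (insert a I) J K := by
  obtain ⟨hdI, hdJK, hu, hI, hJK⟩ := h
  refine ⟨disjoint_insert_left.2 ⟨fun h => ha (hu ▸ mem_union_right I h), hdI⟩, hdJK,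
    by rw [insert_union, hu], hI.trans (card_le_card (subset_insert a I)), hJK⟩

lemma validD_insert_J (h : validD S I J K) (ha : a ∉ S) : validD (insert a S) I (insert a J) K := by
  obtain ⟨hdI, hdJK, hu, hI, hJK⟩ := h
  refine ⟨?_, disjoint_insert_left.2 ⟨fun h => ha (hu ▸ by simp [h]), hdJK⟩,
    by rw [insert_union, union_insert, hu], hI, hJK.trans (card_le_card ?_)⟩
  · rw [insert_union]
    exact disjoint_insert_right.2 ⟨fun h => ha (hu ▸ mem_union_left _ h), hdI⟩
  · rw [insert_union]; exact subset_insert a _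

lemma validD_insert_K (h : validD S I J K) (ha : a ∉ S) : validD (insert a S) I J (insert a K) :=
  validD_symm (validD_insert_J (validD_symm h) ha)

end Insert

section Variables

variable (R : Type) [CommRing R]

lemma reE_comm (S J K : Finset ℕ) : reE R S J K = reE R S K J := by
  unfold reE
  simp only [disjoint_comm (a := K), union_comm K J]
  split_ifs with hv h₁ h₂ h₂ <;> try rfl
  · rw [eq_of_disjoint_of_min_eq hv.1 (le_antisymm h₁ h₂)]
  · exact absurd (le_total J.min K.min) (by tauto)

lemma reD_comm (S I J K : Finset ℕ) : reD R S I J K = reD R S I K J := by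
  unfold reD
  simp only [disjoint_comm (a := K), union_comm K J]
  split_ifs with hv h₁ h₂ h₂ <;> try rfl
  · rw [eq_of_disjoint_of_min_eq hv.2.1 (le_antisymm h₁ h₂)]
  · exact absurd (le_total J.min K.min) (by tauto)

variable {R}

lemma Fre_reE_of_min_le {ℓ : ℕ} {J K : Finset ℕ} (h : validE (Iset ℓ) J K)
    (hmin : J.min ≤ K.min) :
    Fre R ℓ (reE R (Iset ℓ) J K) =
      reE R (Iset (ℓ + 1)) (insert (ℓ + 1) J) K + reE R (Iset (ℓ + 1)) J (insert (ℓ + 1) K) := by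
  have hK : Iset ℓ \ J = K := by rw [← h.2, union_sdiff_cancel_left h.1]
  have hJ : J ⊆ Iset ℓ ∧ J.min = (Iset ℓ).min :=
    ⟨h.2 ▸ subset_union_left, by rw [← h.2, min_union, inf_eq_left.2 hmin]⟩
  rw [reE, if_pos h, if_pos hmin, reXe, dif_pos hJ, Fre, aeval_X]
  simp only [hK, union_singleton]

lemma Fre_reE {ℓ : ℕ} {J K : Finset ℕ} (h : validE (Iset ℓ) J K) :
    Fre R ℓ (reE R (Iset ℓ) J K) =
      reE R (Iset (ℓ + 1)) (insert (ℓ + 1) J) K + reE R (Iset (ℓ + 1)) J (insert (ℓ + 1) K) := by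
  rcases le_total J.min K.min with hmin | hmin
  · exact Fre_reE_of_min_le h hmin
  · rw [reE_comm, Fre_reE_of_min_le (validE_symm h) hmin, reE_comm, reE_comm R _ K]
    exact add_comm _ _

lemma Fre_reD_of_min_le {ℓ : ℕ} {I J K : Finset ℕ} (h : validD (Iset ℓ) I J K)
    (hmin : J.min ≤ K.min) :
    Fre R ℓ (reD R (Iset ℓ) I J K) =
      reD R (Iset (ℓ + 1)) (insert (ℓ + 1) I) J K + reD R (Iset (ℓ + 1)) I (insert (ℓ + 1) J) K
        + reD R (Iset (ℓ + 1)) I J (insert (ℓ + 1) K) := by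
  obtain ⟨hdI, hdJK, hu, hI, hJK⟩ := h
  have hIc : Iset ℓ \ I = J ∪ K := by rw [← hu, union_sdiff_cancel_left hdI]
  have hK : (J ∪ K) \ J = K := union_sdiff_cancel_left hdJK
  have hJ : I ⊆ Iset ℓ ∧ J ⊆ Iset ℓ \ I ∧ 1 ≤ I.card ∧ 2 ≤ (Iset ℓ \ I).card ∧
      J.min = (Iset ℓ \ I).min :=
    ⟨hu ▸ subset_union_left, hIc ▸ subset_union_left, hI, hIc ▸ hJK,
      by rw [hIc, min_union, inf_eq_left.2 hmin]⟩
  rw [reD, if_pos ⟨hdI, hdJK, hu⟩, if_pos hmin, reXd, dif_pos hJ, Fre, aeval_X]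
  simp only [hIc, hK, union_singleton]

lemma Fre_reD {ℓ : ℕ} {I J K : Finset ℕ} (h : validD (Iset ℓ) I J K) :
    Fre R ℓ (reD R (Iset ℓ) I J K) =
      reD R (Iset (ℓ + 1)) (insert (ℓ + 1) I) J K + reD R (Iset (ℓ + 1)) I (insert (ℓ + 1) J) K
        + reD R (Iset (ℓ + 1)) I J (insert (ℓ + 1) K) := by
  rcases le_total J.min K.min with hmin | hmin
  · exact Fre_reD_of_min_le h hmin
  · rw [reD_comm, Fre_reD_of_min_le (validD_symm h) hmin, reD_comm R _ _ K,
      reD_comm R _ _ (insert _ K), reD_comm R _ _ K (insert _ J)]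
    abel

end Variables

lemma mul_mem_of_mem_span {A : Type*} [CommRing A] {S T : Set A} {I : Ideal A} {x y : A}
    (hx : x ∈ Ideal.span S) (hy : y ∈ Ideal.span T) (h : ∀ s ∈ S, ∀ t ∈ T, s * t ∈ I) :
    x * y ∈ I := by
  have hxy := Ideal.mul_mem_mul hx hy
  rw [Ideal.span_mul_span'] at hxy
  refine Ideal.span_le.2 ?_ hxy
  rintro _ ⟨s, hs, t, ht, rfl⟩
  exact h s hs t ht

section QuadraticGenerators

variable {R : Type} [CommRing R] {S : Finset ℕ}

lemma reE_mul_reE_mem_reIdeal {J K J' K' : Finset ℕ} (h : validE S J K) (h' : validE S J' K') :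
    reE R S J K * reE R S J' K' ∈ reIdeal R S :=
  Ideal.subset_span (Or.inl (Or.inl (Or.inl (Or.inl ⟨J, K, J', K', h, h', rfl⟩))))

lemma reE_mul_reD_mem_reIdeal {J K I' J' K' : Finset ℕ} (h : validE S J K)
    (h' : validD S I' J' K') (hp : ¬ preceq J' K' J K) :
    reE R S J K * reD R S I' J' K' ∈ reIdeal R S :=
  Ideal.subset_span (Or.inl (Or.inl (Or.inl (Or.inr ⟨J, K, I', J', K', h, h', hp, rfl⟩))))

lemma reD_mul_reD_mem_reIdeal {I J K I' J' K' : Finset ℕ} (h : validD S I J K)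
    (h' : validD S I' J' K') (hp : ¬ preceq J K J' K') (hp' : ¬ preceq J' K' J K)
    (hs : ¬ J ∪ K ⊆ I') :
    reD R S I J K * reD R S I' J' K' ∈ reIdeal R S :=
  Ideal.subset_span (Or.inl (Or.inl (Or.inr ⟨I, J, K, I', J', K', h, h', hp, hp', hs, rfl⟩)))

lemma relEsum_mem_reIdeal : relEsum R S ∈ reIdeal R S :=
  Ideal.subset_span (Or.inl (Or.inr rfl))

lemma relE_mem_reIdeal {a b c : ℕ} (ha : a ∈ S) (hb : b ∈ S) (hc : c ∈ S) (hab : a ≠ b)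
    (hac : a ≠ c) (hbc : b ≠ c) : relE R S a b c ∈ reIdeal R S :=
  Ideal.subset_span (Or.inr ⟨a, b, c, ha, hb, hc, hab, hac, hbc, rfl⟩)

variable (R) in
def reELifts (ℓ : ℕ) (J K : Finset ℕ) : Set (RRing R (Iset (ℓ + 1))) :=
  {x | ∃ J' K', validE (Iset (ℓ + 1)) J' K' ∧ J' ∩ Iset ℓ = J ∧ K' ∩ Iset ℓ = K ∧
    x = reE R (Iset (ℓ + 1)) J' K'}

variable (R) in
def reDLifts (ℓ : ℕ) (I J K : Finset ℕ) : Set (RRing R (Iset (ℓ + 1))) :=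
  {x | ∃ I' J' K', validD (Iset (ℓ + 1)) I' J' K' ∧ I' ∩ Iset ℓ = I ∧ J' ∩ Iset ℓ = J ∧
    K' ∩ Iset ℓ = K ∧ x = reD R (Iset (ℓ + 1)) I' J' K'}

lemma Fre_reE_mem_span_reELifts {ℓ : ℕ} {J K : Finset ℕ} (h : validE (Iset ℓ) J K) :
    Fre R ℓ (reE R (Iset ℓ) J K) ∈ Ideal.span (reELifts R ℓ J K) := by
  have ha := succ_notMem_Iset ℓ
  have hJ : J ⊆ Iset ℓ := h.2 ▸ subset_union_left
  have hK : K ⊆ Iset ℓ := h.2 ▸ subset_union_right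
  rw [Fre_reE h]
  exact add_mem
    (Ideal.subset_span ⟨_, _, Iset_succ ℓ ▸ validE_insert_left h ha, insert_inter_eq ha hJ,
      inter_eq_left.2 hK, rfl⟩)
    (Ideal.subset_span ⟨_, _, Iset_succ ℓ ▸ validE_insert_right h ha, inter_eq_left.2 hJ,
      insert_inter_eq ha hK, rfl⟩)

lemma Fre_reD_mem_span_reDLifts {ℓ : ℕ} {I J K : Finset ℕ} (h : validD (Iset ℓ) I J K) :
    Fre R ℓ (reD R (Iset ℓ) I J K) ∈ Ideal.span (reDLifts R ℓ I J K) := by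
  have ha := succ_notMem_Iset ℓ
  have hI : I ⊆ Iset ℓ := h.2.2.1 ▸ subset_union_left
  have hJ : J ⊆ Iset ℓ := h.2.2.1 ▸ subset_union_left.trans subset_union_right
  have hK : K ⊆ Iset ℓ := h.2.2.1 ▸ subset_union_right.trans subset_union_right
  rw [Fre_reD h]
  refine add_mem (add_mem ?_ ?_) ?_
  · exact Ideal.subset_span ⟨_, _, _, Iset_succ ℓ ▸ validD_insert_I h ha, insert_inter_eq ha hI,
      inter_eq_left.2 hJ, inter_eq_left.2 hK, rfl⟩
  · exact Ideal.subset_span ⟨_, _, _, Iset_succ ℓ ▸ validD_insert_J h ha, inter_eq_left.2 hI,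
      insert_inter_eq ha hJ, inter_eq_left.2 hK, rfl⟩
  · exact Ideal.subset_span ⟨_, _, _, Iset_succ ℓ ▸ validD_insert_K h ha, inter_eq_left.2 hI,
      inter_eq_left.2 hJ, insert_inter_eq ha hK, rfl⟩

lemma Fre_reE_mul_reE_mem {ℓ : ℕ} {J K J' K' : Finset ℕ} (h : validE (Iset ℓ) J K)
    (h' : validE (Iset ℓ) J' K') :
    Fre R ℓ (reE R (Iset ℓ) J K * reE R (Iset ℓ) J' K') ∈ reIdeal R (Iset (ℓ + 1)) := by
  rw [map_mul]
  refine mul_mem_of_mem_span (Fre_reE_mem_span_reELifts h) (Fre_reE_mem_span_reELifts h') ?_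
  rintro _ ⟨J₁, K₁, h₁, -, -, rfl⟩ _ ⟨J₂, K₂, h₂, -, -, rfl⟩
  exact reE_mul_reE_mem_reIdeal h₁ h₂

lemma Fre_reE_mul_reD_mem {ℓ : ℕ} {J K I' J' K' : Finset ℕ} (h : validE (Iset ℓ) J K)
    (h' : validD (Iset ℓ) I' J' K') (hp : ¬ preceq J' K' J K) :
    Fre R ℓ (reE R (Iset ℓ) J K * reD R (Iset ℓ) I' J' K') ∈ reIdeal R (Iset (ℓ + 1)) := by
  rw [map_mul]
  refine mul_mem_of_mem_span (Fre_reE_mem_span_reELifts h) (Fre_reD_mem_span_reDLifts h') ?_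
  rintro _ ⟨J₁, K₁, h₁, rfl, rfl, rfl⟩ _ ⟨I₂, J₂, K₂, h₂, -, rfl, rfl, rfl⟩
  exact reE_mul_reD_mem_reIdeal h₁ h₂ (mt (preceq_inter _) hp)

lemma Fre_reD_mul_reD_mem {ℓ : ℕ} {I J K I' J' K' : Finset ℕ} (h : validD (Iset ℓ) I J K)
    (h' : validD (Iset ℓ) I' J' K') (hp : ¬ preceq J K J' K') (hp' : ¬ preceq J' K' J K)
    (hs : ¬ J ∪ K ⊆ I') :
    Fre R ℓ (reD R (Iset ℓ) I J K * reD R (Iset ℓ) I' J' K') ∈ reIdeal R (Iset (ℓ + 1)) := by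
  rw [map_mul]
  refine mul_mem_of_mem_span (Fre_reD_mem_span_reDLifts h) (Fre_reD_mem_span_reDLifts h') ?_
  rintro _ ⟨I₁, J₁, K₁, h₁, -, rfl, rfl, rfl⟩ _ ⟨I₂, J₂, K₂, h₂, rfl, rfl, rfl, rfl⟩
  exact reD_mul_reD_mem_reIdeal h₁ h₂ (mt (preceq_inter _) hp) (mt (preceq_inter _) hp')
    (mt union_inter_subset_inter hs)

end QuadraticGenerators

section LinearGenerators

variable {R : Type} [CommRing R]

lemma min_eq_min_Iset_iff {m : ℕ} (hm : 1 ≤ m) {J : Finset ℕ} (hJ : J ⊆ Iset m) :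
    J.min = (Iset m).min ↔ 1 ∈ J := by
  have hpos : ∀ S ⊆ Iset m, ∀ b ∈ S, 1 ≤ b := fun S hS b hb => (mem_Icc.1 (hS hb)).1
  rw [(min_eq_coe_iff_mem (hpos _ subset_rfl)).2 (by simpa using hm),
    min_eq_coe_iff_mem (hpos J hJ)]

lemma relEsum_Iset {m : ℕ} (hm : 1 ≤ m) :
    relEsum R (Iset m) =
      ∑ J ∈ (Iset m).powerset, if 1 ∈ J then reE R (Iset m) J (Iset m \ J) else 0 := by
  rw [relEsum, sum_filter]
  refine sum_congr rfl fun J hJ => ?_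
  simp only [min_eq_min_Iset_iff hm (mem_powerset.1 hJ)]

lemma Fre_relEsum {ℓ : ℕ} (hℓ : 1 ≤ ℓ) :
    Fre R ℓ (relEsum R (Iset ℓ)) = relEsum R (Iset (ℓ + 1)) := by
  have ha := succ_notMem_Iset ℓ
  have hsplit := sum_powerset_insert ha
    (fun J => if 1 ∈ J then reE R (Iset (ℓ + 1)) J (Iset (ℓ + 1) \ J) else 0)
  rw [← Iset_succ] at hsplit
  rw [relEsum_Iset hℓ, relEsum_Iset (by omega), hsplit, map_sum, ← sum_add_distrib]
  refine sum_congr rfl fun J hJ => ?_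
  have hJ : J ⊆ Iset ℓ := mem_powerset.1 hJ
  have h1 : 1 ∈ insert (ℓ + 1) J ↔ 1 ∈ J := by simp; omega
  rw [apply_ite (Fre R ℓ), map_zero, Fre_reE ⟨disjoint_sdiff, union_sdiff_of_subset hJ⟩]
  simp only [h1, Iset_succ_sdiff hJ, Iset_succ_sdiff_insert]
  split_ifs
  exacts [add_comm _ _, (add_zero 0).symm]

variable (R) in
def signedDTerm (S : Finset ℕ) (M : Finset ℕ → Finset ℕ → Finset ℕ → Prop)
    [∀ I J K, Decidable (M I J K)] (I J : Finset ℕ) : RRing R S :=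
  if 1 ≤ I.card ∧ 2 ≤ (S \ I).card ∧ M I J ((S \ I) \ J)
  then epsm J ((S \ I) \ J) • reD R S I J ((S \ I) \ J) else 0

variable (R) in
def signedDSum (S : Finset ℕ) (M : Finset ℕ → Finset ℕ → Finset ℕ → Prop)
    [∀ I J K, Decidable (M I J K)] : RRing R S :=
  ∑ I ∈ S.powerset, ∑ J ∈ (S \ I).powerset, signedDTerm R S M I J

lemma relE_eq_signedDSum (S : Finset ℕ) (a b c : ℕ) :
    relE R S a b c = signedDSum R S (fun I J _ => a ∈ J ∧ b ∈ J ∧ c ∈ I)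
      - signedDSum R S (fun I J _ => a ∈ J ∧ c ∈ J ∧ b ∈ I)
      - signedDSum R S (fun I J K => a ∈ I ∧ b ∈ J ∧ c ∈ K) :=
  rfl

structure LiftableCondition (a : ℕ) (M : Finset ℕ → Finset ℕ → Finset ℕ → Prop) : Prop where
  insert_I : ∀ I J K, M (insert a I) J K ↔ M I J K
  insert_J : ∀ I J K, M I (insert a J) K ↔ M I J K
  insert_K : ∀ I J K, M I J (insert a K) ↔ M I J K
  nonempty_I : ∀ {I J K}, M I J K → I.Nonempty
  nonempty_J : ∀ {I J K}, M I J K → J.Nonempty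
  two_le_card : ∀ {I J K}, M I J K → 2 ≤ (J ∪ K).card

section Liftable

variable {ℓ : ℕ} {M : Finset ℕ → Finset ℕ → Finset ℕ → Prop} [∀ I J K, Decidable (M I J K)]

lemma Fre_signedDTerm (hM : LiftableCondition (ℓ + 1) M) {I J : Finset ℕ} (hI : I ⊆ Iset ℓ)
    (hJ : J ⊆ Iset ℓ \ I) :
    Fre R ℓ (signedDTerm R (Iset ℓ) M I J) =
      signedDTerm R (Iset (ℓ + 1)) M (insert (ℓ + 1) I) J
        + signedDTerm R (Iset (ℓ + 1)) M I (insert (ℓ + 1) J)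
        + signedDTerm R (Iset (ℓ + 1)) M I J := by
  have ha : ℓ + 1 ∉ Iset ℓ \ I := fun h => succ_notMem_Iset ℓ (mem_sdiff.1 h).1
  have haJ : ℓ + 1 ∉ J := fun h => ha (hJ h)
  simp only [signedDTerm, Iset_succ_sdiff_insert, Iset_succ_sdiff hI, insert_sdiff_insert,
    sdiff_insert_of_notMem ha, insert_sdiff_of_notMem _ haJ, card_insert_of_notMem ha,
    hM.insert_I, hM.insert_J, hM.insert_K]
  set K := (Iset ℓ \ I) \ J
  by_cases hm : M I J K
  · have hJK : J ∪ K = Iset ℓ \ I := union_sdiff_of_subset hJ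
    have hc : 1 ≤ I.card := card_pos.2 (hM.nonempty_I hm)
    have hc2 : 2 ≤ (Iset ℓ \ I).card := hJK ▸ hM.two_le_card hm
    have hv : validD (Iset ℓ) I J K :=
      ⟨hJK ▸ disjoint_sdiff, disjoint_sdiff, by rw [hJK, union_sdiff_of_subset hI], hc, hJK ▸ hc2⟩
    have hε : ∃ x ∈ J, x ≤ ℓ + 1 := by
      obtain ⟨x, hx⟩ := hM.nonempty_J hm
      exact ⟨x, hx, by have := mem_Icc.1 ((hJ.trans sdiff_subset) hx); omega⟩
    rw [if_pos ⟨hc, hc2, hm⟩, map_zsmul, Fre_reD hv, smul_add, smul_add,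
      if_pos ⟨card_pos.2 (insert_nonempty _ _), hc2, hm⟩, if_pos ⟨hc, by omega, hm⟩,
      if_pos ⟨hc, by omega, hm⟩, epsm_insert_left K hε, epsm_insert_right K hε]
  · simp [hm]

lemma Fre_signedDSum (hM : LiftableCondition (ℓ + 1) M) :
    Fre R ℓ (signedDSum R (Iset ℓ) M) = signedDSum R (Iset (ℓ + 1)) M := by
  have hsplit :=
    sum_powerset_insert_sdiff (succ_notMem_Iset ℓ) (signedDTerm R (Iset (ℓ + 1)) M)
  rw [← Iset_succ] at hsplit
  rw [signedDSum, signedDSum, hsplit, map_sum]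
  refine sum_congr rfl fun I hI => ?_
  rw [map_sum]
  exact sum_congr rfl fun J hJ => Fre_signedDTerm hM (mem_powerset.1 hI) (mem_powerset.1 hJ)

end Liftable

lemma Fre_relE {ℓ a b c : ℕ} (ha : a ∈ Iset ℓ) (hb : b ∈ Iset ℓ) (hc : c ∈ Iset ℓ)
    (hab : a ≠ b) (hac : a ≠ c) (hbc : b ≠ c) :
    Fre R ℓ (relE R (Iset ℓ) a b c) = relE R (Iset (ℓ + 1)) a b c := by
  have hne : ∀ x ∈ Iset ℓ, x ≠ ℓ + 1 := fun x hx h => succ_notMem_Iset ℓ (h ▸ hx)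
  rw [relE_eq_signedDSum, relE_eq_signedDSum, map_sub, map_sub, Fre_signedDSum, Fre_signedDSum,
    Fre_signedDSum]
  · exact ⟨fun _ _ _ => by simp [hne a ha], fun _ _ _ => by simp [hne b hb],
      fun _ _ _ => by simp [hne c hc], fun h => ⟨a, h.1⟩, fun h => ⟨b, h.2.1⟩,
      fun h => one_lt_card.2 ⟨b, mem_union_left _ h.2.1, c, mem_union_right _ h.2.2, hbc⟩⟩
  · exact ⟨fun _ _ _ => by simp [hne b hb], fun _ _ _ => by simp [hne a ha, hne c hc],
      fun _ _ _ => Iff.rfl, fun h => ⟨b, h.2.2⟩, fun h => ⟨a, h.1⟩,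
      fun h => one_lt_card.2 ⟨a, mem_union_left _ h.1, c, mem_union_left _ h.2.1, hac⟩⟩
  · exact ⟨fun _ _ _ => by simp [hne c hc], fun _ _ _ => by simp [hne a ha, hne b hb],
      fun _ _ _ => Iff.rfl, fun h => ⟨c, h.2.2⟩, fun h => ⟨a, h.1⟩,
      fun h => one_lt_card.2 ⟨a, mem_union_left _ h.1, b, mem_union_left _ h.2.1, hab⟩⟩

end LinearGenerators

/-- `F(I_{0,[ℓ]}) ⊆ I_{0,[ℓ+1]}` for the homomorphism
`F : R_{0,[ℓ]} → R_{0,[ℓ+1]}`. -/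
theorem stmt8 (R : Type) [CommRing R] (ℓ : ℕ) (hℓ : 2 ≤ ℓ) :
    ∀ x ∈ reIdeal R (Iset ℓ), Fre R ℓ x ∈ reIdeal R (Iset (ℓ + 1)) := by
  refine fun x hx => (Ideal.span_le (I := (reIdeal R (Iset (ℓ + 1))).comap (Fre R ℓ))).2 ?_ hx
  rintro _ ((((⟨J, K, J', K', h, h', rfl⟩ | ⟨J, K, I', J', K', h, h', hp, rfl⟩) |
    ⟨I, J, K, I', J', K', h, h', hp, hp', hs, rfl⟩) | rfl) |
    ⟨a, b, c, ha, hb, hc, hab, hac, hbc, rfl⟩)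
  · exact Fre_reE_mul_reE_mem h h'
  · exact Fre_reE_mul_reD_mem h h' hp
  · exact Fre_reD_mul_reD_mem h h' hp hp' hs
  · rw [SetLike.mem_coe, Ideal.mem_comap, Fre_relEsum (by omega)]
    exact relEsum_mem_reIdeal
  · rw [SetLike.mem_coe, Ideal.mem_comap, Fre_relE ha hb hc hab hac hbc]
    have hsub := Iset_subset_Iset_succ ℓ
    exact relE_mem_reIdeal (hsub ha) (hsub hb) (hsub hc) hab hac hbc

end
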